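/- Let d ≥ 1 and let θ_1, …, θ_d be real numbers with (1/d)·Σ_{k=1}^d θ_k = α. For each positive integer m set p_m(x) := ∏_{k=1}^d (x − e^{θ_k/m}). Then for every k ∈ {0,1,…,d}, lim_{m→∞} ã_k(p_m)^m = e^{αk}; equivalently, the polynomials p_m^{⊠_d m} converge coefficientwise to (x − e^α)^d as m → ∞. -/

import Mathlib

open Finset Filter

/-- For `p(x) = Σ_{i=0}^d a_i x^{d-i}`, `atilde d p i = (-1)^i * (d.choose i)⁻¹ * a_i`. -/
noncomputable def atilde (d : ℕ) (p : Polynomial ℂ) (i : ℕ) : ℂ :=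
  (-1) ^ i * ((d.choose i : ℂ))⁻¹ * p.coeff (d - i)

/-- Finite free multiplicative convolution of degree-`d` polynomials. -/
noncomputable def ffmul (d : ℕ) (p q : Polynomial ℂ) : Polynomial ℂ :=
  ∑ i ∈ Finset.range (d + 1),
    Polynomial.C ((-1) ^ i * (d.choose i : ℂ) * atilde d p i * atilde d q i) *
      Polynomial.X ^ (d - i)

/-- The `m`-fold finite free multiplicative convolution power `p^{⊠_d m}`;
the empty convolution is the identity `(x-1)^d` for `⊠_d`. -/
noncomputable def ffpow (d : ℕ) (p : Polynomial ℂ) : ℕ → Polynomial ℂ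
  | 0 => (Polynomial.X - 1) ^ d
  | m + 1 => ffmul d (ffpow d p m) p

/-!
By Vieta, `ã_k(p_m)` is the mean of `exp (s_S / m)` over the `k`-subsets `S` of the indices,
where `s_S = Σ_{j ∈ S} θ_j`. For any `f` with `f 0 = 1` one has `f (1/m) ^ m → exp (f' 0)`;
applied to `f z = mean_S exp (z s_S)` this gives `ã_k(p_m)^m → exp (mean_S s_S)`, and
`mean_S s_S = k α` because each index lies in a proportion `k / d` of the `k`-subsets. Since `ã_k`
is multiplicative for `⊠_d` and determines the coefficients of a polynomial of degree at most `d`,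
the second claim follows.
-/

open Polynomial Complex

lemma atilde_eq_iff_coeff {d i : ℕ} (hi : i ≤ d) (P : ℂ[X]) (x : ℂ) :
    atilde d P i = x ↔ P.coeff (d - i) = (-1) ^ i * d.choose i * x := by
  have hC : (d.choose i : ℂ) ≠ 0 := Nat.cast_ne_zero.2 (Nat.choose_pos hi).ne'
  have hsign : ((-1 : ℂ) ^ i) ^ 2 = 1 := by rw [← pow_mul, mul_comm, pow_mul]; norm_num
  rw [atilde]
  constructor <;> intro h
  · rw [← h]; field_simp; rw [hsign, mul_one]
  · rw [h]; field_simp; rw [hsign, one_mul]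

lemma coeff_eq_atilde {d i : ℕ} (hi : i ≤ d) (P : ℂ[X]) :
    P.coeff (d - i) = (-1) ^ i * d.choose i * atilde d P i :=
  (atilde_eq_iff_coeff hi P _).1 rfl

lemma atilde_X_sub_C_pow {d i : ℕ} (hi : i ≤ d) (a : ℂ) : atilde d ((X - C a) ^ d) i = a ^ i := by
  rw [atilde_eq_iff_coeff hi, sub_eq_add_neg, ← C_neg, coeff_X_add_C_pow, Nat.sub_sub_self hi,
    Nat.choose_symm hi, neg_pow]
  ring

lemma coeff_ffmul_sub {d i : ℕ} (hi : i ≤ d) (p q : ℂ[X]) :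
    (ffmul d p q).coeff (d - i) = (-1) ^ i * d.choose i * (atilde d p i * atilde d q i) := by
  rw [ffmul, finsetSum_coeff, Finset.sum_eq_single i]
  · rw [coeff_C_mul_X_pow, if_pos rfl]; ring
  · intro i' hi' hne
    rw [coeff_C_mul_X_pow, if_neg (by rw [Finset.mem_range] at hi'; omega)]
  · intro h; exact absurd (Finset.mem_range.2 (by omega)) h

lemma atilde_ffmul {d i : ℕ} (hi : i ≤ d) (p q : ℂ[X]) :
    atilde d (ffmul d p q) i = atilde d p i * atilde d q i :=
  (atilde_eq_iff_coeff hi _ _).2 (coeff_ffmul_sub hi p q)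

lemma natDegree_ffmul_le (d : ℕ) (p q : ℂ[X]) : (ffmul d p q).natDegree ≤ d :=
  natDegree_sum_le_of_forall_le _ _ fun _ _ => (natDegree_C_mul_X_pow_le _ _).trans (Nat.sub_le _ _)

lemma natDegree_X_sub_C_pow_le {R : Type*} [Ring R] (d : ℕ) (a : R) :
    ((X - C a) ^ d).natDegree ≤ d :=
  (natDegree_pow_le_of_le d (natDegree_X_sub_C_le a)).trans_eq (mul_one d)

lemma ffpow_zero (d : ℕ) (p : ℂ[X]) : ffpow d p 0 = (X - C 1) ^ d := by
  rw [ffpow, C_1]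

lemma natDegree_ffpow_le (d : ℕ) (p : ℂ[X]) (m : ℕ) : (ffpow d p m).natDegree ≤ d := by
  cases m with
  | zero => rw [ffpow_zero]; exact natDegree_X_sub_C_pow_le d 1
  | succ m => exact natDegree_ffmul_le d _ _

lemma atilde_ffpow {d i : ℕ} (hi : i ≤ d) (p : ℂ[X]) (m : ℕ) :
    atilde d (ffpow d p m) i = atilde d p i ^ m := by
  induction m with
  | zero => rw [ffpow_zero, atilde_X_sub_C_pow hi, one_pow, pow_zero]
  | succ m ih => rw [ffpow, atilde_ffmul hi, ih, pow_succ]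

lemma atilde_prod_X_sub_C {d i : ℕ} (hi : i ≤ d) (a : Fin d → ℂ) :
    atilde d (∏ j, (X - C (a j))) i
      = (d.choose i : ℂ)⁻¹ * ∑ S ∈ Finset.univ.powersetCard i, ∏ j ∈ S, a j := by
  have hmap : ∏ j, (X - C (a j)) = ((Finset.univ.val.map a).map fun t => X - C t).prod := by
    rw [Multiset.map_map]; rfl
  have hcard : Multiset.card (Finset.univ.val.map a) = d := by simp
  rw [atilde_eq_iff_coeff hi, hmap,
    Multiset.prod_X_sub_C_coeff _ (by rw [hcard]; exact Nat.sub_le d i), hcard,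
    Nat.sub_sub_self hi, Finset.esymm_map_val]
  have hC : (d.choose i : ℂ) ≠ 0 := Nat.cast_ne_zero.2 (Nat.choose_pos hi).ne'
  field_simp

lemma tendsto_coeff_of_tendsto_atilde {β : Type*} {l : Filter β} {d : ℕ} {P : β → ℂ[X]}
    {Q : ℂ[X]} (hP : ∀ b, (P b).natDegree ≤ d) (hQ : Q.natDegree ≤ d)
    (h : ∀ i ≤ d, Tendsto (fun b => atilde d (P b) i) l (nhds (atilde d Q i))) (j : ℕ) :
    Tendsto (fun b => (P b).coeff j) l (nhds (Q.coeff j)) := by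
  rcases le_or_gt j d with hj | hj
  · obtain ⟨i, hi, rfl⟩ : ∃ i ≤ d, j = d - i := ⟨d - j, Nat.sub_le d j, by omega⟩
    simp only [coeff_eq_atilde hi]
    exact (h i hi).const_mul _
  · simp only [coeff_eq_zero_of_natDegree_lt ((hP _).trans_lt hj),
      coeff_eq_zero_of_natDegree_lt (hQ.trans_lt hj), tendsto_const_nhds]

lemma tendsto_pow_exp_of_hasDerivAt {f : ℂ → ℂ} {c : ℂ} (hf : HasDerivAt f c 0) (h0 : f 0 = 1) :
    Tendsto (fun n : ℕ => f (n : ℂ)⁻¹ ^ n) atTop (nhds (exp c)) := by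
  have hinv : Tendsto (fun n : ℕ => (n : ℂ)⁻¹) atTop (nhdsWithin 0 {0}ᶜ) :=
    tendsto_nhdsWithin_iff.2 ⟨tendsto_inv_atTop_nhds_zero_nat,
      (eventually_ne_atTop 0).mono fun n hn => by simpa using hn⟩
  have hslope := hf.tendsto_slope.comp hinv
  refine (tendsto_one_add_pow_exp_of_tendsto (g := fun n => f (n : ℂ)⁻¹ - 1)
    (hslope.congr fun n => ?_)).congr fun n => by simp
  simp only [Function.comp_apply, slope_def_field, h0, sub_zero]
  rw [div_inv_eq_mul, mul_comm]

lemma tendsto_mean_exp_div_pow {ι : Type*} {t : Finset ι} (ht : t.Nonempty) (s : ι → ℂ) :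
    Tendsto (fun n : ℕ => ((#t : ℂ)⁻¹ * ∑ i ∈ t, exp (s i / n)) ^ n) atTop
      (nhds (exp ((#t : ℂ)⁻¹ * ∑ i ∈ t, s i))) := by
  have hderiv : HasDerivAt (fun z => (#t : ℂ)⁻¹ * ∑ i ∈ t, exp (z * s i))
      ((#t : ℂ)⁻¹ * ∑ i ∈ t, s i) 0 := by
    have := (HasDerivAt.fun_sum (u := t) fun i _ =>
      ((hasDerivAt_id (0 : ℂ)).mul_const (s i)).cexp).const_mul (#t : ℂ)⁻¹
    simpa using this
  have hcard : (#t : ℂ) ≠ 0 := Nat.cast_ne_zero.2 ht.card_pos.ne'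
  convert tendsto_pow_exp_of_hasDerivAt hderiv (by simp [hcard]) using 4 with n i
  simp only [div_eq_inv_mul]

lemma sum_powersetCard_sum {ι M : Type*} [DecidableEq ι] [AddCommMonoid M] (u : Finset ι) {k : ℕ}
    (hk : 0 < k) (f : ι → M) :
    ∑ S ∈ u.powersetCard k, ∑ j ∈ S, f j = (#u - 1).choose (k - 1) • ∑ j ∈ u, f j := by
  rw [Finset.sum_comm' (t' := u) (s' := fun j => (u.powersetCard k).filter ({j} ⊆ ·))]
  · rw [Finset.smul_sum]
    refine Finset.sum_congr rfl fun j hj => ?_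
    rw [Finset.sum_const, card_filter_powersetCard_subset _ _ _ (by simpa using hj)
      (by rw [card_singleton]; exact hk), card_singleton]
  · intro S j
    simp only [mem_filter, mem_powersetCard, singleton_subset_iff]
    exact ⟨fun h => ⟨h, h.1.1 h.2⟩, fun h => h.1⟩

lemma mean_powersetCard_sum {ι K : Type*} [DecidableEq ι] [Field K] [CharZero K] (u : Finset ι)
    {k : ℕ} (hk : k ≤ #u) (f : ι → K) :
    ((#u).choose k : K)⁻¹ * ∑ S ∈ u.powersetCard k, ∑ j ∈ S, f j = k / #u * ∑ j ∈ u, f j := by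
  rcases k.eq_zero_or_pos with rfl | hk0
  · simp
  obtain ⟨n, hn⟩ : ∃ n, #u = n + 1 := ⟨#u - 1, by omega⟩
  obtain ⟨k, rfl⟩ : ∃ k', k = k' + 1 := ⟨k - 1, by omega⟩
  have hchoose : ((n + 1 : ℕ) : K) * n.choose k = (n + 1).choose (k + 1) * ((k + 1 : ℕ) : K) := by
    exact_mod_cast Nat.add_one_mul_choose_eq n k
  have hC : ((n + 1).choose (k + 1) : K) ≠ 0 := Nat.cast_ne_zero.2 (Nat.choose_pos (by omega)).ne'
  rw [sum_powersetCard_sum u hk0, nsmul_eq_mul, hn, Nat.add_sub_cancel, Nat.add_sub_cancel]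
  field_simp
  linear_combination (∑ j ∈ u, f j) * hchoose

lemma tendsto_atilde_prod_X_sub_exp_pow {d i : ℕ} (hi : i ≤ d) (θ : Fin d → ℂ) :
    Tendsto (fun m : ℕ => atilde d (∏ j, (X - C (exp (θ j / m)))) i ^ m) atTop
      (nhds (exp (i / d * ∑ j, θ j))) := by
  set t := (Finset.univ : Finset (Fin d)).powersetCard i
  have hcard : #t = d.choose i := by simp [t]
  have ht : t.Nonempty := Finset.card_pos.1 (hcard ▸ Nat.choose_pos hi)
  have hmean := mean_powersetCard_sum Finset.univ (by simpa using hi) θ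
  simp only [card_univ, Fintype.card_fin] at hmean
  convert tendsto_mean_exp_div_pow ht (fun S => ∑ j ∈ S, θ j) using 3 with m
  · rw [atilde_prod_X_sub_C hi, hcard]
    simp only [← exp_sum, Finset.sum_div]
    rfl
  · rw [hcard, hmean]

theorem statement14_general (d : ℕ) (θ : Fin d → ℝ) (α : ℝ)
    (hα : (∑ k, θ k) / (d : ℝ) = α)
    (p : ℕ → Polynomial ℂ)
    (hp : ∀ m, p m = ∏ k, (Polynomial.X -
      Polynomial.C ((Real.exp (θ k / (m : ℝ)) : ℝ) : ℂ))) :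
    (∀ k ≤ d, Tendsto (fun m => atilde d (p m) k ^ m) atTop
        (nhds (((Real.exp (α * (k : ℝ)) : ℝ) : ℂ)))) ∧
    (∀ j, Tendsto (fun m => (ffpow d (p m) m).coeff j) atTop
        (nhds (((Polynomial.X - Polynomial.C ((Real.exp α : ℝ) : ℂ)) ^ d).coeff j))) := by
  subst hα
  have hp' : p = fun m : ℕ => ∏ k, (X - C (exp ((θ k : ℂ) / m))) := by
    funext m; simp [hp]
  have hlim : ∀ k ≤ d, Tendsto (fun m => atilde d (p m) k ^ m) atTop
      (nhds (exp ((∑ j, θ j : ℂ) / d * k))) := by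
    intro k hk
    rw [hp', div_mul_comm]
    exact tendsto_atilde_prod_X_sub_exp_pow hk _
  refine ⟨fun k hk => by simpa using hlim k hk, fun j => ?_⟩
  refine tendsto_coeff_of_tendsto_atilde (fun m => natDegree_ffpow_le d _ m)
    (natDegree_X_sub_C_pow_le d _) (fun i hi => ?_) j
  simp only [atilde_ffpow hi, atilde_X_sub_C_pow hi, ofReal_exp, ← exp_nat_mul]
  simpa [mul_comm] using hlim i hi

theorem statement14 (d : ℕ) (hd : 1 ≤ d) (θ : Fin d → ℝ) (α : ℝ)
    (hα : (∑ k, θ k) / (d : ℝ) = α)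
    (p : ℕ → Polynomial ℂ)
    (hp : ∀ m, p m = ∏ k, (Polynomial.X -
      Polynomial.C ((Real.exp (θ k / (m : ℝ)) : ℝ) : ℂ))) :
    (∀ k ≤ d, Tendsto (fun m => atilde d (p m) k ^ m) atTop
        (nhds (((Real.exp (α * (k : ℝ)) : ℝ) : ℂ)))) ∧
    (∀ j, Tendsto (fun m => (ffpow d (p m) m).coeff j) atTop
        (nhds (((Polynomial.X - Polynomial.C ((Real.exp α : ℝ) : ℂ)) ^ d).coeff j))) :=
  statement14_general d θ α hα p hp
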